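/- In the same Markov chain model, every invariant (stationary) probability measure μ_ε is supported in [−ε, ε], hence every weak-* accumulation point of (μ_ε)_{ε→0} is the Dirac mass δ₀ at 0. -/

import Mathlib

open MeasureTheory Metric Filter BoundedContinuousFunction

/-- One step of the chain killed upon entering the ball `(−ε, ε)`:
evolve by the kernel `κ` and restrict to the complement of the ball. -/
noncomputable def killedStep (κ : AddCircle (1 : ℝ) → Measure (AddCircle (1 : ℝ)))
    (ε : ℝ) (ν : Measure (AddCircle (1 : ℝ))) : Measure (AddCircle (1 : ℝ)) :=
  (ν.bind κ).restrict (ball (0 : AddCircle (1 : ℝ)) ε)ᶜ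

/-!
A stationary measure `μ` is a fixed point of `ν ↦ ν.bind κ`. Since `φ_ε` sends the ball
`B = ball 0 ε` to `0`, the kernel started in `B` lands in `closedBall 0 ε`, which is `B` up to a
null set; so no mass flows from `B` to `Bᶜ`, and `μ.restrict Bᶜ` is a fixed point of the killed
step. Its mass is then `∫⁻ z, Pₙ(z) ∂μ|Bᶜ` for every `n`, where `Pₙ(z)` is the probability that
the chain started at `z` has not entered `B` by time `n`; by dominated convergence this tends to
`0`. The limit statement follows because measures supported in shrinking balls around `0`
converge weakly to `δ₀`.
-/

open scoped ProbabilityTheory Topology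

section IteratedBind

variable {α : Type*} [MeasurableSpace α] {η : α → Measure α}

lemma Measurable.measure_restrict (hη : Measurable η) {s : Set α} (hs : MeasurableSet s) :
    Measurable fun z => (η z).restrict s := by
  refine Measure.measurable_of_measurable_coe _ fun t ht => ?_
  simp_rw [Measure.restrict_apply ht]
  exact Measure.measurable_coe (ht.inter hs) |>.comp hη

lemma Measure.bind_restrict (hη : Measurable η) {s : Set α} (hs : MeasurableSet s)
    (ν : Measure α) : (ν.bind η).restrict s = ν.bind fun z => (η z).restrict s := by
  ext A hA
  rw [Measure.restrict_apply hA, Measure.bind_apply (hA.inter hs) hη.aemeasurable,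
    Measure.bind_apply hA (hη.measure_restrict hs).aemeasurable]
  simp_rw [Measure.restrict_apply hA]

lemma measurable_iterate_bind_dirac (hη : Measurable η) (n : ℕ) :
    Measurable fun z => (·.bind η)^[n] (Measure.dirac z) :=
  ((Measure.measurable_bind' hη).iterate n).comp Measure.measurable_dirac

lemma iterate_bind_eq_bind_iterate_dirac (hη : Measurable η) (n : ℕ) (ν : Measure α) :
    (·.bind η)^[n] ν = ν.bind fun z => (·.bind η)^[n] (Measure.dirac z) := by
  induction n with
  | zero => simp
  | succ n ih =>
    simp only [Function.iterate_succ_apply']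
    rw [ih, Measure.bind_bind (measurable_iterate_bind_dirac hη n).aemeasurable hη.aemeasurable]

lemma iterate_bind_apply_univ_le (hη : Measurable η) (hη₁ : ∀ z, η z Set.univ ≤ 1) (n : ℕ)
    (ν : Measure α) : (·.bind η)^[n] ν Set.univ ≤ ν Set.univ := by
  induction n with
  | zero => rfl
  | succ n ih =>
    rw [Function.iterate_succ_apply', Measure.bind_apply .univ hη.aemeasurable]
    exact ((lintegral_mono hη₁).trans_eq lintegral_one).trans ih

theorem eq_zero_of_bind_eq_self {ν : Measure α} [IsFiniteMeasure ν] (hη : Measurable η)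
    (hη₁ : ∀ z, η z Set.univ ≤ 1) (hfix : ν.bind η = ν)
    (hdie : ∀ᵐ z ∂ν,
      Tendsto (fun n => (·.bind η)^[n] (Measure.dirac z) Set.univ) atTop (𝓝 0)) :
    ν = 0 := by
  have hmass (n : ℕ) : ν Set.univ = ∫⁻ z, (·.bind η)^[n] (Measure.dirac z) Set.univ ∂ν := by
    conv_lhs => rw [← Function.iterate_fixed (f := fun m : Measure α => m.bind η) hfix n,
      iterate_bind_eq_bind_iterate_dirac hη]
    exact Measure.bind_apply .univ (measurable_iterate_bind_dirac hη n).aemeasurable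
  have hlim := tendsto_lintegral_of_dominated_convergence (fun _ => 1)
    (fun n => (Measure.measurable_coe .univ).comp (measurable_iterate_bind_dirac hη n))
    (fun n => ae_of_all _ fun z => (iterate_bind_apply_univ_le hη hη₁ n _).trans_eq
      measure_univ) (by simp) hdie
  rw [← Measure.measure_univ_eq_zero]
  exact tendsto_nhds_unique (tendsto_const_nhds.congr hmass) (by simpa using hlim)

lemma bind_restrict_compl_eq_self_of_stationary {μ : Measure α} {s : Set α}
    (hs : MeasurableSet s) (hη : Measurable η)
    (hstat : ∀ A, MeasurableSet A → μ A = ∫⁻ z, η z A ∂μ) (habs : ∀ z ∈ s, η z sᶜ = 0) :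
    (μ.restrict sᶜ).bind (fun z => (η z).restrict sᶜ) = μ.restrict sᶜ := by
  ext A hA
  have hno_flow : ∫⁻ z in s, η z (A ∩ sᶜ) ∂μ = 0 :=
    (setLIntegral_congr_fun hs fun z hz =>
      measure_mono_null Set.inter_subset_right (habs z hz)).trans lintegral_zero
  have hsplit := lintegral_add_compl (μ := μ) (fun z => η z (A ∩ sᶜ)) hs
  rw [hno_flow, zero_add] at hsplit
  rw [Measure.bind_apply hA (hη.measure_restrict hs.compl).aemeasurable, Measure.restrict_apply hA,
    hstat _ (hA.inter hs.compl), ← hsplit]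
  simp_rw [Measure.restrict_apply hA]

end IteratedBind

section UniformKernel

variable {X : Type*} [PseudoMetricSpace X] [SecondCountableTopology X] [MeasurableSpace X]
  [OpensMeasurableSpace X]

lemma measurable_measure_closedBall_inter (ν : Measure X) [SFinite ν] {s : Set X}
    (hs : MeasurableSet s) (r : ℝ) : Measurable fun c => ν (closedBall c r ∩ s) := by
  have hS : MeasurableSet ({p : X × X | dist p.2 p.1 ≤ r} ∩ Prod.snd ⁻¹' s) :=
    (measurableSet_le (continuous_snd.dist continuous_fst).measurable measurable_const).inter
      (measurable_snd hs)
  exact measurable_measure_prodMk_left hS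

lemma measurable_cond_closedBall (ν : Measure X) [SFinite ν] (r : ℝ) :
    Measurable fun c => ν[|closedBall c r] := by
  refine Measure.measurable_of_measurable_coe _ fun s hs => ?_
  simp_rw [ProbabilityTheory.cond_apply' hs]
  have hmass := measurable_measure_closedBall_inter ν .univ r
  simp only [Set.inter_univ] at hmass
  exact hmass.inv.mul (measurable_measure_closedBall_inter ν hs r)

end UniformKernel

theorem measure_compl_ball_eq_zero_of_stationary {T : ℝ} [Fact (0 < T)] {ε : ℝ}
    {φ : AddCircle T → AddCircle T} (hφ : Continuous φ) (hφ₀ : ∀ z ∈ ball 0 ε, φ z = 0)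
    {κ : AddCircle T → Measure (AddCircle T)} (hκ : ∀ z, κ z = volume[|closedBall (φ z) ε])
    (hdie : ∀ z, Tendsto
      (fun n => (fun ν => (ν.bind κ).restrict (ball 0 ε)ᶜ)^[n] (Measure.dirac z) Set.univ)
      atTop (𝓝 0))
    {μ : Measure (AddCircle T)} [IsFiniteMeasure μ]
    (hstat : ∀ A, MeasurableSet A → μ A = ∫⁻ z, κ z A ∂μ) :
    μ (ball 0 ε)ᶜ = 0 := by
  have hB : MeasurableSet (ball (0 : AddCircle T) ε) := measurableSet_ball
  have hκm : Measurable κ := by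
    rw [show κ = (fun c => volume[|closedBall c ε]) ∘ φ from funext hκ]
    exact (measurable_cond_closedBall volume ε).comp hφ.measurable
  have habs : ∀ z ∈ ball 0 ε, κ z (ball 0 ε)ᶜ = 0 := fun z hz => by
    rw [hκ, hφ₀ z hz, ProbabilityTheory.cond_apply' hB.compl, ← Set.sdiff_eq,
      ae_le_set.mp AddCircle.closedBall_ae_eq_ball.le, mul_zero]
  rw [← Measure.restrict_apply_univ, Measure.measure_univ_eq_zero]
  refine eq_zero_of_bind_eq_self (hκm.measure_restrict hB.compl)
    (fun z => (Measure.restrict_apply_univ _).trans_le (by rw [hκ]; exact prob_le_one))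
    (bind_restrict_compl_eq_self_of_stationary hB hκm hstat habs)
    (ae_of_all _ (by simpa only [Measure.bind_restrict hκm hB.compl] using hdie))

theorem tendsto_integral_of_ae_dist_le {X ι : Type*} [PseudoMetricSpace X] [MeasurableSpace X]
    [OpensMeasurableSpace X] {l : Filter ι} {μ : ι → Measure X}
    [∀ i, IsProbabilityMeasure (μ i)] {x : X} {r : ι → ℝ} (hr : Tendsto r l (𝓝 0))
    (hμ : ∀ i, ∀ᵐ y ∂μ i, dist y x ≤ r i) (f : X →ᵇ ℝ) :
    Tendsto (fun i => ∫ y, f y ∂μ i) l (𝓝 (f x)) := by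
  rw [Metric.tendsto_nhds]
  intro δ hδ
  obtain ⟨ρ, hρ, hf⟩ := Metric.continuousAt_iff.mp f.continuous.continuousAt (δ / 2) (half_pos hδ)
  filter_upwards [hr.eventually (gt_mem_nhds hρ)] with i hi
  have hclose : ∀ᵐ y ∂μ i, ‖f y - f x‖ ≤ δ / 2 :=
    (hμ i).mono fun y hy => (dist_eq_norm (f y) (f x) ▸ hf (hy.trans_lt hi)).le
  calc dist (∫ y, f y ∂μ i) (f x) = ‖∫ y, (f y - f x) ∂μ i‖ := by
        rw [dist_eq_norm, integral_sub (f.integrable _) (integrable_const _)]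
        simp
    _ ≤ δ / 2 := by simpa using norm_integral_le_of_norm_le_const hclose
    _ < δ := half_lt_self hδ

theorem stationary_measures_concentrate_at_zero_general (ε₀ : ℝ)
    (φ : ℝ → AddCircle (1 : ℝ) → AddCircle (1 : ℝ))
    (hφcont : ∀ ε ∈ Set.Ioo 0 ε₀, Continuous (φ ε))
    (hφ0 : ∀ ε ∈ Set.Ioo 0 ε₀, ∀ z ∈ ball (0 : AddCircle (1 : ℝ)) ε, φ ε z = 0)
    (κ : ℝ → AddCircle (1 : ℝ) → Measure (AddCircle (1 : ℝ)))
    (hκ : ∀ ε ∈ Set.Ioo 0 ε₀, ∀ z, κ ε z = (volume (closedBall (φ ε z) ε))⁻¹ •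
      (volume : Measure (AddCircle (1 : ℝ))).restrict (closedBall (φ ε z) ε))
    (hEnter : ∀ ε ∈ Set.Ioo 0 ε₀, ∀ z : AddCircle (1 : ℝ),
      Tendsto (fun n => (killedStep (κ ε) ε)^[n] (Measure.dirac z) Set.univ) atTop (nhds 0))
    (μ : ℝ → Measure (AddCircle (1 : ℝ)))
    (hμprob : ∀ ε ∈ Set.Ioo 0 ε₀, IsProbabilityMeasure (μ ε))
    (hμstat : ∀ ε ∈ Set.Ioo 0 ε₀, ∀ A : Set (AddCircle (1 : ℝ)), MeasurableSet A →
      μ ε A = ∫⁻ z, κ ε z A ∂(μ ε)) :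
    (∀ ε ∈ Set.Ioo 0 ε₀, μ ε (closedBall (0 : AddCircle (1 : ℝ)) ε)ᶜ = 0) ∧
      ∀ (e : ℕ → ℝ), (∀ n, e n ∈ Set.Ioo 0 ε₀) → Tendsto e atTop (nhds 0) →
        ∀ ν : Measure (AddCircle (1 : ℝ)), IsProbabilityMeasure ν →
          (∀ f : AddCircle (1 : ℝ) →ᵇ ℝ,
            Tendsto (fun n => ∫ x, f x ∂(μ (e n))) atTop (nhds (∫ x, f x ∂ν))) →
          ν = Measure.dirac 0 := by
  have hsupp : ∀ ε ∈ Set.Ioo 0 ε₀, μ ε (closedBall (0 : AddCircle (1 : ℝ)) ε)ᶜ = 0 :=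
    fun ε hε =>
      have := hμprob ε hε
      measure_mono_null (Set.compl_subset_compl.mpr ball_subset_closedBall)
        (measure_compl_ball_eq_zero_of_stationary (hφcont ε hε) (hφ0 ε hε) (hκ ε hε)
          (hEnter ε hε) (hμstat ε hε))
  refine ⟨hsupp, fun e he he₀ ν hν hconv => ?_⟩
  have := fun n => hμprob (e n) (he n)
  refine ext_of_forall_integral_eq_of_IsFiniteMeasure fun f => ?_
  rw [integral_dirac]
  exact tendsto_nhds_unique (hconv f) (tendsto_integral_of_ae_dist_le he₀
    (fun n => mem_ae_iff.mpr (hsupp _ (he n))) f)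

/-- **Stochastic instability of the doubling map.**
For each small `ε > 0` let `φ_ε` be continuous on `S¹ = ℝ/ℤ`, with `φ_ε ≡ 0` on
`(−ε, ε)` and `φ_ε = T₀` (the doubling map) outside `(−2ε, 2ε)`, and let the
transition kernel `κ_ε(·|z)` be the normalized Lebesgue measure on
`[φ_ε(z) − ε, φ_ε(z) + ε]`.  Assume that from every point the chain almost surely
eventually enters `(−ε, ε)` (the killed chain dies out).  Then every stationary
probability measure `μ_ε` is supported in `[−ε, ε]`, and every weak-* accumulation
point of `(μ_ε)` as `ε → 0` is the Dirac mass `δ₀` at `0`. -/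
theorem stationary_measures_concentrate_at_zero (ε₀ : ℝ) (hε₀ : 0 < ε₀) (hε₀small : ε₀ < 1 / 8)
    (φ : ℝ → AddCircle (1 : ℝ) → AddCircle (1 : ℝ))
    (hφcont : ∀ ε ∈ Set.Ioo 0 ε₀, Continuous (φ ε))
    (hφ0 : ∀ ε ∈ Set.Ioo 0 ε₀, ∀ z ∈ ball (0 : AddCircle (1 : ℝ)) ε, φ ε z = 0)
    (hφout : ∀ ε ∈ Set.Ioo 0 ε₀, ∀ z ∉ ball (0 : AddCircle (1 : ℝ)) (2 * ε),
      φ ε z = (2 : ℕ) • z)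
    (κ : ℝ → AddCircle (1 : ℝ) → Measure (AddCircle (1 : ℝ)))
    (hκ : ∀ ε ∈ Set.Ioo 0 ε₀, ∀ z, κ ε z = (volume (closedBall (φ ε z) ε))⁻¹ •
      (volume : Measure (AddCircle (1 : ℝ))).restrict (closedBall (φ ε z) ε))
    (hEnter : ∀ ε ∈ Set.Ioo 0 ε₀, ∀ z : AddCircle (1 : ℝ),
      Tendsto (fun n => (killedStep (κ ε) ε)^[n] (Measure.dirac z) Set.univ) atTop (nhds 0))
    (μ : ℝ → Measure (AddCircle (1 : ℝ)))
    (hμprob : ∀ ε ∈ Set.Ioo 0 ε₀, IsProbabilityMeasure (μ ε))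
    (hμstat : ∀ ε ∈ Set.Ioo 0 ε₀, ∀ A : Set (AddCircle (1 : ℝ)), MeasurableSet A →
      μ ε A = ∫⁻ z, κ ε z A ∂(μ ε)) :
    (∀ ε ∈ Set.Ioo 0 ε₀, μ ε (closedBall (0 : AddCircle (1 : ℝ)) ε)ᶜ = 0) ∧
      ∀ (e : ℕ → ℝ), (∀ n, e n ∈ Set.Ioo 0 ε₀) → Tendsto e atTop (nhds 0) →
        ∀ ν : Measure (AddCircle (1 : ℝ)), IsProbabilityMeasure ν →
          (∀ f : AddCircle (1 : ℝ) →ᵇ ℝ,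
            Tendsto (fun n => ∫ x, f x ∂(μ (e n))) atTop (nhds (∫ x, f x ∂ν))) →
          ν = Measure.dirac 0 :=
  stationary_measures_concentrate_at_zero_general ε₀ φ hφcont hφ0 κ hκ hEnter μ hμprob hμstat
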